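/- arXiv:1709.07976 — 5 statements merged into one kernel-verified Lean document; each statement's English description precedes it below -/
import Mathlib

section
/- For the exponential distribution with rate parameter b > 0, the Chernoff information between the density f_Z(z) = b·e^{-bz} (z ≥ 0) and its shift f_Z(z - Δ) equals bΔ; that is, -min_{0≤s≤1} log ∫_Δ^∞ (f_Z(y))^s (f_Z(y-Δ))^{1-s} dy = bΔ. -/
open MeasureTheory Real Set

/-! The geometric mean `f_Z(y)^s f_Z(y - Δ)^(1-s)` is the density `b e^{-b y}` rescaled by
`e^{b Δ (1 - s)}`, and its mass on `(Δ, ∞)` is `e^{-b Δ s}`. So the Chernoff exponent is the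
linear function `s ↦ -b Δ s`, whose minimum over `[0, 1]` is attained at `s = 1`. -/

lemma mul_exp_rpow_mul_mul_exp_rpow_one_sub {b : ℝ} (hb : 0 < b) (u v s : ℝ) :
    (b * exp u) ^ s * (b * exp v) ^ (1 - s) = b * exp (s * u + (1 - s) * v) := by
  rw [mul_rpow hb.le (exp_pos u).le, mul_rpow hb.le (exp_pos v).le, ← exp_mul, ← exp_mul,
    mul_mul_mul_comm, ← rpow_add hb, ← exp_add]
  simp only [add_sub_cancel, rpow_one, mul_comm u, mul_comm v]

lemma setIntegral_exp_neg_mul_Ioi {b : ℝ} (hb : 0 < b) (c : ℝ) :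
    ∫ y in Ioi c, exp (-(b * y)) = exp (-(b * c)) / b := by
  have h := integral_exp_mul_Ioi (neg_lt_zero.mpr hb) c
  rw [div_neg, neg_div, neg_neg] at h
  simpa only [neg_mul] using h

lemma setIntegral_exp_density_rpow_mul_shift_rpow {b : ℝ} (hb : 0 < b) (Δ s : ℝ) :
    ∫ y in Ioi Δ, (b * exp (-(b * y))) ^ s * (b * exp (-(b * (y - Δ)))) ^ (1 - s)
      = exp (-(b * Δ * s)) := by
  have h_integrand : ∀ y : ℝ,
      (b * exp (-(b * y))) ^ s * (b * exp (-(b * (y - Δ)))) ^ (1 - s)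
        = b * exp (b * Δ * (1 - s)) * exp (-(b * y)) := by
    intro y
    rw [mul_exp_rpow_mul_mul_exp_rpow_one_sub hb, mul_assoc, ← exp_add]
    ring_nf
  simp_rw [h_integrand]
  rw [integral_const_mul, setIntegral_exp_neg_mul_Ioi hb, mul_right_comm,
    mul_div_cancel₀ _ hb.ne', ← exp_add]
  ring_nf

/-- Chernoff information between an exponential density with rate `b` and its
shift by `Δ` equals `b * Δ`. -/
theorem exp_chernoff_information (b Δ : ℝ) (hb : 0 < b) (hΔ : 0 < Δ) :
    -sInf ((fun s : ℝ =>
        Real.log (∫ y in Set.Ioi Δ,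
          (b * Real.exp (-(b * y))) ^ s *
            (b * Real.exp (-(b * (y - Δ)))) ^ (1 - s))) '' Set.Icc (0:ℝ) 1)
      = b * Δ := by
  have h_exponent : ∀ s : ℝ,
      Real.log (∫ y in Set.Ioi Δ,
        (b * Real.exp (-(b * y))) ^ s * (b * Real.exp (-(b * (y - Δ)))) ^ (1 - s))
        = -(b * Δ * s) := fun s => by
    rw [setIntegral_exp_density_rpow_mul_shift_rpow hb, log_exp]
  have h_antitone : AntitoneOn (fun s : ℝ => -(b * Δ * s)) (Icc 0 1) :=
    fun _ _ _ _ hst => neg_le_neg (mul_le_mul_of_nonneg_left hst (mul_pos hb hΔ).le)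
  rw [image_congr fun s _ => h_exponent s, h_antitone.sInf_image_Icc zero_le_one]
  ring
end

section
/- Let f_Z be a differentiable unimodal density on (0,∞) with positive mode m_Z > 0 and satisfying inf_{0 < z ≤ m_Z} f_Z(z) ≥ τ > 0 and sup_z f'_Z(z) < ∞. Then there exists a finite M_0 such that for all M > M_0 the density of the minimum of M i.i.d. samples, f_{Z_FA}(z) = M·f_Z(z)·(1-F_Z(z))^{M-1}, is weakly decreasing on (0,∞), hence unimodal. -/
/-!
The density of the minimum is `g = M f (1 - F)^(M-1)`, with
`g' = M (1 - F)^(M-2) (f' (1 - F) - (M - 1) f²)`, so it suffices that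
`f' (1 - F) ≤ (M - 1) f²` on `(0, ∞)`. Past the mode `f' ≤ 0`, so this holds for every `M`;
on `(0, m]` the left side is at most `C⁺ (1 - F 0)` and the right side at least `(M - 1) τ²`.
-/

open Set Filter Topology

theorem HasDerivAt.nonpos_of_antitoneOn {g : ℝ → ℝ} {g' x : ℝ} {s : Set ℝ}
    (hd : HasDerivAt g g' x) (hg : AntitoneOn g s) (hs : s ∈ 𝓝 x) : g' ≤ 0 := by
  refine hd.hasDerivWithinAt.nonpos_of_antitoneOn (accPt_principal_iff_nhdsWithin.2 ?_) hg
  rw [sdiff_eq, nhdsWithin_inter_of_mem (mem_nhdsWithin_of_mem_nhds hs)]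
  infer_instance

theorem hasDerivAt_mul_mul_one_sub_pow_succ {f F : ℝ → ℝ} {f' z : ℝ} (c : ℝ) (n : ℕ)
    (hf : HasDerivAt f f' z) (hF : HasDerivAt F (f z) z) :
    HasDerivAt (fun x => c * f x * (1 - F x) ^ (n + 1))
      (c * (1 - F z) ^ n * (f' * (1 - F z) - (n + 1) * f z ^ 2)) z :=
  ((hf.const_mul c).mul ((hF.const_sub 1).pow (n + 1))).congr_deriv <| by
    simp only [Pi.pow_apply]; push_cast; ring

theorem antitoneOn_mul_mul_one_sub_pow_succ {s : Set ℝ} (hs : IsOpen s) (hs' : Convex ℝ s)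
    {f F f' : ℝ → ℝ} {c : ℝ} (hc : 0 ≤ c) (n : ℕ)
    (hf : ∀ z ∈ s, HasDerivAt f (f' z) z) (hF : ∀ z ∈ s, HasDerivAt F (f z) z)
    (hF1 : ∀ z ∈ s, F z ≤ 1) (h : ∀ z ∈ s, f' z * (1 - F z) ≤ (n + 1) * f z ^ 2) :
    AntitoneOn (fun x => c * f x * (1 - F x) ^ (n + 1)) s := by
  have hd z (hz : z ∈ s) := hasDerivAt_mul_mul_one_sub_pow_succ c n (hf z hz) (hF z hz)
  refine antitoneOn_of_hasDerivWithinAt_nonpos hs'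
    (f' := fun z => c * (1 - F z) ^ n * (f' z * (1 - F z) - (n + 1) * f z ^ 2))
    (fun z hz => (hd z hz).continuousAt.continuousWithinAt) (fun z hz => ?_) (fun z hz => ?_)
  all_goals rw [hs.interior_eq] at hz
  · exact (hd z hz).hasDerivWithinAt
  · exact mul_nonpos_of_nonneg_of_nonpos (mul_nonneg hc (pow_nonneg (sub_nonneg.2 (hF1 z hz)) n))
      (sub_nonpos.2 (h z hz))

theorem deriv_mul_one_sub_le_mul_sq {f F f' : ℝ → ℝ} {m τ C n z : ℝ} (hτ : 0 < τ)
    (hanti : AntitoneOn f (Ici m)) (hlb : ∀ z ∈ Ioc 0 m, τ ≤ f z)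
    (hderiv : ∀ z ∈ Ioi 0, HasDerivAt f (f' z) z) (hC : ∀ z ∈ Ioi 0, f' z ≤ C)
    (hFmono : Monotone F) (hF1 : ∀ z, F z ≤ 1)
    (hn : max C 0 * (1 - F 0) / τ ^ 2 ≤ n) (hz : 0 < z) :
    f' z * (1 - F z) ≤ n * f z ^ 2 := by
  have hsurv : 0 ≤ 1 - F z := sub_nonneg.2 (hF1 z)
  have hn0 : 0 ≤ n :=
    (div_nonneg (mul_nonneg (le_max_right _ _) (sub_nonneg.2 (hF1 0))) (sq_nonneg τ)).trans hn
  rcases le_or_gt z m with hzm | hmz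
  · have hfz : τ ≤ f z := hlb z ⟨hz, hzm⟩
    calc f' z * (1 - F z) ≤ max C 0 * (1 - F 0) :=
          mul_le_mul (le_max_of_le_left (hC z hz)) (by linarith [hFmono hz.le]) hsurv
            (le_max_right _ _)
      _ ≤ n * τ ^ 2 := (div_le_iff₀ (by positivity)).1 hn
      _ ≤ n * f z ^ 2 := by gcongr
  · calc f' z * (1 - F z) ≤ 0 := mul_nonpos_of_nonpos_of_nonneg
          ((hderiv z hz).nonpos_of_antitoneOn hanti (Ici_mem_nhds hmz)) hsurv
      _ ≤ n * f z ^ 2 := by positivity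

theorem min_density_eventually_unimodal_general
    (f F f' : ℝ → ℝ) (m τ C : ℝ) (hτ : 0 < τ)
    (hanti : AntitoneOn f (Set.Ici m))
    (hlb : ∀ z ∈ Set.Ioc (0:ℝ) m, τ ≤ f z)
    (hderiv : ∀ z ∈ Set.Ioi (0:ℝ), HasDerivAt f (f' z) z)
    (hC : ∀ z ∈ Set.Ioi (0:ℝ), f' z ≤ C)
    (hFderiv : ∀ z ∈ Set.Ioi (0:ℝ), HasDerivAt F (f z) z)
    (hFmono : Monotone F) (hF1 : ∀ z, F z ≤ 1) :
    ∃ M₀ : ℕ, ∀ M : ℕ, M₀ < M →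
      AntitoneOn (fun z => (M : ℝ) * f z * (1 - F z) ^ (M - 1)) (Set.Ioi (0:ℝ)) := by
  refine ⟨⌈max C 0 * (1 - F 0) / τ ^ 2⌉₊ + 1, fun M hM => ?_⟩
  obtain ⟨n, rfl⟩ : ∃ n, M = n + 2 := ⟨M - 2, by omega⟩
  have hn : max C 0 * (1 - F 0) / τ ^ 2 ≤ (n : ℝ) + 1 := by
    exact_mod_cast Nat.ceil_le.1 (by omega)
  simpa using antitoneOn_mul_mul_one_sub_pow_succ isOpen_Ioi (convex_Ioi 0)
    (Nat.cast_nonneg (n + 2)) n hderiv hFderiv (fun z _ => hF1 z)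
    fun z hz => deriv_mul_one_sub_le_mul_sq hτ hanti hlb hderiv hC hFmono hF1 hn hz

/-- If `f` is a differentiable unimodal density on `(0,∞)` with mode `m > 0`,
bounded derivative, and bounded below by `τ > 0` on `(0, m]`, then there exists
`M₀` such that for all `M > M₀` the density of the minimum of `M` i.i.d. samples,
`z ↦ M · f z · (1 - F z)^(M-1)`, is weakly decreasing (hence unimodal) on `(0,∞)`. -/
theorem min_density_eventually_unimodal
    (f F f' : ℝ → ℝ) (m τ C : ℝ) (hm : 0 < m) (hτ : 0 < τ)
    (hf0 : ∀ z, 0 ≤ f z)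
    (hmono : MonotoneOn f (Set.Ioc (0:ℝ) m))
    (hanti : AntitoneOn f (Set.Ici m))
    (hlb : ∀ z ∈ Set.Ioc (0:ℝ) m, τ ≤ f z)
    (hderiv : ∀ z ∈ Set.Ioi (0:ℝ), HasDerivAt f (f' z) z)
    (hC : ∀ z ∈ Set.Ioi (0:ℝ), f' z ≤ C)
    (hFderiv : ∀ z ∈ Set.Ioi (0:ℝ), HasDerivAt F (f z) z)
    (hFmono : Monotone F) (hF1 : ∀ z, F z ≤ 1) :
    ∃ M₀ : ℕ, ∀ M : ℕ, M₀ < M →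
      AntitoneOn (fun z => (M : ℝ) * f z * (1 - F z) ^ (M - 1)) (Set.Ioi (0:ℝ)) :=
  min_density_eventually_unimodal_general f F f' m τ C hτ hanti hlb hderiv hC hFderiv hFmono hF1
end

section
/- Let Z_1,...,Z_M be i.i.d. with a unimodal density f_Z supported on [m_Z, ∞) for some m_Z ≥ 0 (so f_Z(z) = 0 for z < m_Z and f_Z is weakly decreasing on its support in the sense that f_Z(y) ≤ f_Z(y - Δ) for all y ≥ Δ > 0 when the mode equals m_Z = 0). Consider the binary hypothesis test X ∈ {0, Δ} with observations Y_m = X + Z_m. Then the maximum-likelihood decision based on (Y_1,...,Y_M) depends on the observations only through Y_FA = min_m Y_m: specifically, ML declares X̂ = 0 whenever some Y_m < Δ (equivalently Y_FA < Δ), and X̂ = Δ otherwise, and this rule achieves the same error probability as the ML detector based on Y_FA alone. -/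
open Finset

variable {ι : Type*} {s : Finset ι} {f : ℝ → ℝ} {y : ι → ℝ} {Δ : ℝ}

theorem prod_comp_sub_le_prod_of_exists_lt (hf0 : ∀ z, 0 ≤ f z)
    (hsupp : ∀ z < (0:ℝ), f z = 0) (h : ∃ i ∈ s, y i < Δ) :
    ∏ i ∈ s, f (y i - Δ) ≤ ∏ i ∈ s, f (y i) := by
  obtain ⟨i, hi, hyi⟩ := h
  calc ∏ j ∈ s, f (y j - Δ) = 0 := prod_eq_zero hi (hsupp _ (by linarith))
    _ ≤ ∏ j ∈ s, f (y j) := prod_nonneg fun j _ => hf0 _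

theorem prod_le_prod_comp_sub_of_forall_le (hf0 : ∀ z, 0 ≤ f z)
    (hdec : AntitoneOn f (Set.Ici (0:ℝ))) (hΔ : 0 ≤ Δ) (h : ∀ i ∈ s, Δ ≤ y i) :
    ∏ i ∈ s, f (y i) ≤ ∏ i ∈ s, f (y i - Δ) :=
  prod_le_prod (fun _ _ => hf0 _) fun i hi =>
    hdec (Set.mem_Ici.mpr (sub_nonneg.mpr (h i hi)))
      (Set.mem_Ici.mpr (hΔ.trans (h i hi))) (sub_le_self _ hΔ)

theorem ml_equals_fa_zero_mode_general (M : ℕ) (hM : 0 < M) (Δ : ℝ) (hΔ : 0 < Δ)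
    (f : ℝ → ℝ) (hf0 : ∀ z, 0 ≤ f z)
    (hsupp : ∀ z < (0:ℝ), f z = 0)
    (hdec : AntitoneOn f (Set.Ici (0:ℝ)))
    (y : Fin M → ℝ) :
    ((∃ i, y i < Δ) ↔ Finset.univ.inf' (Finset.univ_nonempty_iff.mpr ⟨⟨0, hM⟩⟩) y < Δ) ∧
    ((∃ i, y i < Δ) → ∏ i, f (y i - Δ) ≤ ∏ i, f (y i)) ∧
    ((∀ i, Δ ≤ y i) → ∏ i, f (y i) ≤ ∏ i, f (y i - Δ)) := by
  refine ⟨by simp [inf'_lt_iff], fun ⟨i, hi⟩ => ?_, fun h => ?_⟩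
  · exact prod_comp_sub_le_prod_of_exists_lt hf0 hsupp ⟨i, mem_univ i, hi⟩
  · exact prod_le_prod_comp_sub_of_forall_le hf0 hdec hΔ.le fun i _ => h i

/-- For a zero-mode unimodal noise density `f` (supported on `[0,∞)` and weakly
decreasing there), the ML decision for the binary timing channel `Y_m = X + Z_m`,
`X ∈ {0, Δ}`, depends on the observations only through the first arrival
`min_m Y_m`: if some `Y_m < Δ` (equivalently `min_m Y_m < Δ`) the likelihood of
`X = 0` dominates, and otherwise the likelihood of `X = Δ` dominates. -/
theorem ml_equals_fa_zero_mode (M : ℕ) (hM : 0 < M) (Δ : ℝ) (hΔ : 0 < Δ)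
    (f : ℝ → ℝ) (hf0 : ∀ z, 0 ≤ f z)
    (hsupp : ∀ z < (0:ℝ), f z = 0)
    (hdec : AntitoneOn f (Set.Ici (0:ℝ)))
    (y : Fin M → ℝ) (hy : ∀ i, 0 ≤ y i) :
    ((∃ i, y i < Δ) ↔ Finset.univ.inf' (Finset.univ_nonempty_iff.mpr ⟨⟨0, hM⟩⟩) y < Δ) ∧
    ((∃ i, y i < Δ) → ∏ i, f (y i - Δ) ≤ ∏ i, f (y i)) ∧
    ((∀ i, Δ ≤ y i) → ∏ i, f (y i) ≤ ∏ i, f (y i - Δ)) :=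
  ml_equals_fa_zero_mode_general M hM Δ hΔ f hf0 hsupp hdec y
end

section
/- For an exponential random variable Z with rate b > 0 and rate function Λ*_Z(v) = bv - 1 - log(bv), the value α = (1 - e^{bΔ}(1 - bΔ)) / ((e^{bΔ} - 1)·b) satisfies the balancing equation Λ*_Z(μ + α) = Λ*_Z(μ - Δ + α), where μ = 1/b is the mean, provided 0 < Δ and μ - Δ + α > 0. -/
/-!
The rate function `v ↦ b v - 1 - log (b v)` takes equal values at `x` and `y = x - Δ` exactly
when `b x = e^{bΔ} · b y`, since then the logarithms differ by `bΔ = b x - b y`. The given `α` is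
the solution of this linear equation for `x = 1/b + α`.
-/

open Real

lemma rateFun_eq_of_mul_eq_exp_mul {b x y Δ : ℝ} (hy : b * y ≠ 0) (hxy : x - y = Δ)
    (h : b * x = exp (b * Δ) * (b * y)) :
    b * x - 1 - log (b * x) = b * y - 1 - log (b * y) := by
  have hlog : log (b * x) = b * Δ + log (b * y) := by
    rw [h, log_mul (exp_ne_zero _) hy, log_exp]
  rw [hlog]
  linear_combination b * hxy

lemma mul_inv_add_eq_exp_mul_of_balancing {b Δ α : ℝ} (hb : b ≠ 0) (hΔ : Δ ≠ 0)
    (hα : α = (1 - exp (b * Δ) * (1 - b * Δ)) / ((exp (b * Δ) - 1) * b)) :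
    b * (1 / b + α) = exp (b * Δ) * (b * (1 / b - Δ + α)) := by
  have hexp : exp (b * Δ) - 1 ≠ 0 :=
    sub_ne_zero.mpr fun h => mul_ne_zero hb hΔ (exp_eq_one_iff _ |>.mp h)
  rw [hα]
  field_simp
  ring

/-- For an exponential random variable with rate `b > 0`, mean `μ = 1/b` and rate
function `Λ*(v) = b v - 1 - log (b v)`, the value
`α = (1 - e^{bΔ}(1 - bΔ)) / ((e^{bΔ} - 1) b)` balances the two tails:
`Λ*(μ + α) = Λ*(μ - Δ + α)`. -/
theorem exp_balancing_alpha (b Δ : ℝ) (hb : 0 < b) (hΔ : 0 < Δ)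
    (Λstar : ℝ → ℝ) (hΛ : ∀ v > (0:ℝ), Λstar v = b * v - 1 - Real.log (b * v))
    (α : ℝ)
    (hα : α = (1 - Real.exp (b * Δ) * (1 - b * Δ)) / ((Real.exp (b * Δ) - 1) * b))
    (hpos : 0 < 1 / b - Δ + α) :
    Λstar (1 / b + α) = Λstar (1 / b - Δ + α) := by
  have hkey := mul_inv_add_eq_exp_mul_of_balancing hb.ne' hΔ.ne' hα
  have hy : 0 < b * (1 / b - Δ + α) := mul_pos hb hpos
  have hx : 0 < 1 / b + α := pos_of_mul_pos_right (hkey ▸ by positivity) hb.le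
  rw [hΛ _ hx, hΛ _ hpos]
  exact rateFun_eq_of_mul_eq_exp_mul hy.ne' (by ring) hkey
end

section
/- Suppose f_Z is a continuous differentiable unimodal density on (0,∞) with lim_{z→0+} f_Z(z) = 0, f'_Z(z) ≥ 0 for 0 < z < ε, and the function g(z) = f'_Z(z)/f_Z(z)² is monotonically decreasing on (0, ε]. Then lim_{z→0+} f'_Z(z)(1 - F_Z(z))/f_Z(z)² = +∞, provided f'_Z does not vanish identically near 0. -/
open Set Filter Topology

/-! If `g = f'/f²` is antitone near `0`, then `-1/f`, whose derivative is `g`, is concave there.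
A concave function's derivative dominates every secant slope to its right, and the secant slopes
from `z` to a fixed point blow up as `z → 0⁺` because `-1/f(z) → -∞`. Since `1 - F → 1`,
multiplying by `1 - F` does not change the limit. -/

theorem concaveOn_of_hasDerivAt_of_antitoneOn {D : Set ℝ} (hD : Convex ℝ D) (hD' : IsOpen D)
    {φ φ' : ℝ → ℝ} (hderiv : ∀ x ∈ D, HasDerivAt φ (φ' x) x) (hanti : AntitoneOn φ' D) :
    ConcaveOn ℝ D φ := by
  refine AntitoneOn.concaveOn_of_deriv hD
    (fun x hx => (hderiv x hx).continuousAt.continuousWithinAt)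
    (fun x hx => (hderiv x (interior_subset hx)).differentiableAt.differentiableWithinAt) ?_
  rw [hD'.interior_eq]
  exact hanti.congr fun x hx => ((hderiv x hx).deriv).symm

theorem tendsto_atTop_of_concaveOn_of_tendsto_atBot {a b : ℝ} (hab : a < b) {φ φ' : ℝ → ℝ}
    (hconc : ConcaveOn ℝ (Ioo a b) φ) (hderiv : ∀ x ∈ Ioo a b, HasDerivAt φ (φ' x) x)
    (hφ : Tendsto φ (𝓝[>] a) atBot) : Tendsto φ' (𝓝[>] a) atTop := by
  obtain ⟨c, hac, hcb⟩ := exists_between hab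
  have hslope_le : ∀ᶠ x in 𝓝[>] a, slope φ x c ≤ φ' x := by
    filter_upwards [Ioo_mem_nhdsGT hac] with x hx
    exact hconc.slope_le_of_hasDerivAt ⟨hx.1, hx.2.trans hcb⟩ ⟨hac, hcb⟩ hx.2
      (hderiv x ⟨hx.1, hx.2.trans hcb⟩)
  have hrise : Tendsto (fun x => φ c - φ x) (𝓝[>] a) atTop :=
    tendsto_atTop_add_const_left _ _ (tendsto_neg_atBot_atTop.comp hφ)
  have hrun : Tendsto (fun x => (c - x)⁻¹) (𝓝[>] a) (𝓝 (c - a)⁻¹) :=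
    ((tendsto_const_nhds.sub tendsto_id).inv₀ (sub_ne_zero.mpr hac.ne')).mono_left
      nhdsWithin_le_nhds
  have hslope : Tendsto (fun x => slope φ x c) (𝓝[>] a) atTop := by
    simpa only [slope_def_field, div_eq_mul_inv] using
      hrise.atTop_mul_pos (inv_pos.mpr (sub_pos.mpr hac)) hrun
  exact tendsto_atTop_mono' _ hslope_le hslope

theorem tendsto_neg_inv_atBot_of_tendsto_zero {f : ℝ → ℝ} {ε : ℝ} (hε : 0 < ε)
    (hfpos : ∀ z ∈ Ioo (0:ℝ) ε, 0 < f z) (hf0 : Tendsto f (𝓝[>] 0) (𝓝 0)) :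
    Tendsto (fun z => -(f z)⁻¹) (𝓝[>] 0) atBot := by
  have hf0' : Tendsto f (𝓝[>] 0) (𝓝[>] 0) :=
    tendsto_nhdsWithin_iff.mpr ⟨hf0, eventually_of_mem (Ioo_mem_nhdsGT hε) hfpos⟩
  exact tendsto_neg_atTop_atBot.comp (tendsto_inv_nhdsGT_zero.comp hf0')

theorem ratio_tendsto_atTop_general (f F f' : ℝ → ℝ) (ε : ℝ) (hε : 0 < ε)
    (hderiv : ∀ z ∈ Set.Ioo (0:ℝ) ε, HasDerivAt f (f' z) z)
    (hfpos : ∀ z ∈ Set.Ioo (0:ℝ) ε, 0 < f z)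
    (hf0 : Tendsto f (nhdsWithin 0 (Set.Ioi 0)) (nhds 0))
    (hganti : AntitoneOn (fun z => f' z / (f z) ^ 2) (Set.Ioc (0:ℝ) ε))
    (hF0 : Tendsto F (nhdsWithin 0 (Set.Ioi 0)) (nhds 0)) :
    Tendsto (fun z => f' z * (1 - F z) / (f z) ^ 2)
      (nhdsWithin 0 (Set.Ioi 0)) atTop := by
  have hφ : ∀ z ∈ Ioo (0:ℝ) ε, HasDerivAt (fun z => -(f z)⁻¹) (f' z / f z ^ 2) z := by
    intro z hz
    have h := ((hderiv z hz).inv (hfpos z hz).ne').neg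
    rwa [neg_div, neg_neg] at h
  have hconc : ConcaveOn ℝ (Ioo 0 ε) (fun z => -(f z)⁻¹) :=
    concaveOn_of_hasDerivAt_of_antitoneOn (convex_Ioo 0 ε) isOpen_Ioo hφ
      (hganti.mono Ioo_subset_Ioc_self)
  have hg : Tendsto (fun z => f' z / f z ^ 2) (𝓝[>] 0) atTop :=
    tendsto_atTop_of_concaveOn_of_tendsto_atBot hε hconc hφ
      (tendsto_neg_inv_atBot_of_tendsto_zero hε hfpos hf0)
  have hsurvival : Tendsto (fun z => 1 - F z) (𝓝[>] 0) (𝓝 1) := by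
    simpa only [sub_zero] using tendsto_const_nhds.sub hF0
  exact (hg.atTop_mul_pos one_pos hsurvival).congr fun z => div_mul_eq_mul_div _ _ _

/-- If `f` is a differentiable density on `(0,∞)` with `f → 0` at `0⁺`, `f' > 0`
near `0`, and `g = f'/f²` monotonically decreasing on `(0, ε]`, then
`f'(z)(1 - F(z))/f(z)² → ∞` as `z → 0⁺`. -/
theorem ratio_tendsto_atTop (f F f' : ℝ → ℝ) (ε : ℝ) (hε : 0 < ε)
    (hderiv : ∀ z ∈ Set.Ioo (0:ℝ) ε, HasDerivAt f (f' z) z)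
    (hfpos : ∀ z ∈ Set.Ioo (0:ℝ) ε, 0 < f z)
    (hf'pos : ∀ z ∈ Set.Ioo (0:ℝ) ε, 0 < f' z)
    (hf0 : Tendsto f (nhdsWithin 0 (Set.Ioi 0)) (nhds 0))
    (hganti : AntitoneOn (fun z => f' z / (f z) ^ 2) (Set.Ioc (0:ℝ) ε))
    (hF0 : Tendsto F (nhdsWithin 0 (Set.Ioi 0)) (nhds 0))
    (hFmono : Monotone F) (hF1 : ∀ z, F z ≤ 1) :
    Tendsto (fun z => f' z * (1 - F z) / (f z) ^ 2)
      (nhdsWithin 0 (Set.Ioi 0)) atTop :=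
  ratio_tendsto_atTop_general f F f' ε hε hderiv hfpos hf0 hganti hF0
end
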